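/- arXiv:1303.1921 — 5 statements merged into one kernel-verified Lean document; each statement's English description precedes it below -/
import Mathlib

section
/- The square root of x1 + x2 cannot be expressed as a formal power series in x1^(1/m) and x2^(1/m) for any positive integer m; that is, there is no element f of k[[x1^(1/m), x2^(1/m)]] with f^2 = x1 + x2, when k is a field of characteristic zero. -/
/-!
If `f ^ 2 = y₁ ^ m + y₂ ^ m` in `k[[y₁, y₂]]`, then `f ≠ 0`, and since the right-hand side is
homogeneous of degree `m`, the lowest-degree homogeneous component `g` of `f` already satisfies
`g ^ 2 = y₁ ^ m + y₂ ^ m`; being homogeneous, `g` is a polynomial.  Dehomogenizing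
(`y₁ ↦ t`, `y₂ ↦ 1`) gives a polynomial square root of `t ^ m + 1` in `k[t]`, which is
impossible since `t ^ m + 1` is separable of positive degree in characteristic zero.
-/

namespace Polynomial

theorem not_isSquare_X_pow_sub_C {K : Type*} [Field K] {n : ℕ} (hn : (n : K) ≠ 0) {a : K}
    (ha : a ≠ 0) : ¬ IsSquare (X ^ n - C a) := by
  rintro ⟨r, hr⟩
  have hunit : IsUnit r := (separable_X_pow_sub_C a hn ha).squarefree r ⟨1, by rw [hr, mul_one]⟩
  have hdeg := natDegree_eq_zero_of_isUnit (hr ▸ hunit.mul hunit)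
  rw [natDegree_X_pow_sub_C] at hdeg
  exact hn (by rw [hdeg, Nat.cast_zero])

end Polynomial

namespace MvPowerSeries

variable {σ R : Type*}

theorem homogeneousComponent_order_mul_homogeneousComponent_order [CommRing R] [NoZeroDivisors R]
    {f g : MvPowerSeries σ R} (hf : f ≠ 0) (hg : g ≠ 0) {n : ℕ} (hfg : (f * g).IsHomogeneous n) :
    homogeneousComponent f.order.toNat f * homogeneousComponent g.order.toNat g = f * g := by
  have hf' := ne_zero_iff_order_finite.mp hf
  have hg' := ne_zero_iff_order_finite.mp hg
  have hlow := homogeneousComponent_mul_of_le_order hf'.le hg'.le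
  have hne : homogeneousComponent (f.order.toNat + g.order.toNat) (f * g) ≠ 0 := by
    rw [hlow]
    exact mul_ne_zero (homogeneousComponent_of_order hf')
      (homogeneousComponent_of_order hg')
  obtain ⟨d, hd⟩ := (ne_zero_iff_exists_coeff_ne_zero _).mp hne
  rw [coeff_homogeneousComponent] at hd
  split_ifs at hd with hdeg
  · have hn : f.order.toNat + g.order.toNat = n := by
      rw [← hdeg]
      by_contra h
      exact hd (hfg.coeff_eq_zero h)
    rw [← hlow, hn, ← isHomogeneous_iff_eq_homogeneousComponent.mp hfg]
  · exact absurd rfl hd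

theorem IsHomogeneous.coe_truncTotal [Finite σ] [CommSemiring R] {f : MvPowerSeries σ R} {n : ℕ}
    (hf : f.IsHomogeneous n) : (truncTotal (n + 1) f : MvPowerSeries σ R) = f := by
  ext d
  rw [MvPolynomial.coeff_coe, coeff_truncTotal_eq_ite]
  split_ifs with hd
  · rfl
  · exact (hf.coeff_eq_zero (by omega)).symm

end MvPowerSeries

namespace MvPolynomial

variable {σ R : Type*}

theorem IsHomogeneous.toMvPowerSeries [CommSemiring R] {φ : MvPolynomial σ R} {n : ℕ}
    (hφ : φ.IsHomogeneous n) : (φ : MvPowerSeries σ R).IsHomogeneous n :=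
  fun hd ↦ hφ (by rwa [coeff_coe] at hd)

theorem IsHomogeneous.isSquare_of_isSquare_coe [Finite σ] [CommRing R] [NoZeroDivisors R]
    {φ : MvPolynomial σ R} {n : ℕ} (hφ : φ.IsHomogeneous n)
    (hsq : IsSquare (φ : MvPowerSeries σ R)) : IsSquare φ := by
  obtain ⟨f, hf⟩ := hsq
  rcases eq_or_ne f 0 with rfl | hf0
  · exact ⟨0, by simpa using hf⟩
  set g := MvPowerSeries.homogeneousComponent f.order.toNat f
  have hg : g * g = φ := by
    rw [hf]
    exact MvPowerSeries.homogeneousComponent_order_mul_homogeneousComponent_order hf0 hf0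
      (hf ▸ hφ.toMvPowerSeries)
  refine ⟨MvPowerSeries.truncTotal (f.order.toNat + 1) g, coe_injective σ R ?_⟩
  rw [coe_mul, MvPowerSeries.IsHomogeneous.coe_truncTotal
    (MvPowerSeries.isHomogeneous_homogeneousComponent f _), hg]

theorem not_isSquare_X_pow_add_X_pow {K : Type*} [Field K] {n : ℕ} (hn : (n : K) ≠ 0) :
    ¬ IsSquare (X 0 ^ n + X 1 ^ n : MvPolynomial (Fin 2) K) := by
  intro hsq
  have hdehom := hsq.map (aeval ![Polynomial.X, (1 : Polynomial K)])
  refine Polynomial.not_isSquare_X_pow_sub_C hn (neg_ne_zero.mpr one_ne_zero) ?_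
  simpa [sub_eq_add_neg] using hdehom

end MvPolynomial

/-- **No square root of `x₁ + x₂` as a Puiseux-type power series.**
Writing `yᵢ = xᵢ^(1/m)`, the ring `k[[x₁^(1/m), x₂^(1/m)]]` is identified with the formal
power series ring `k[[y₁, y₂]]`, in which `x₁ + x₂ = y₁^m + y₂^m`.  The statement: for every
positive integer `m` there is no formal power series `f ∈ k[[y₁,y₂]]` with
`f ^ 2 = y₁ ^ m + y₂ ^ m`, i.e. the square root of `x₁ + x₂` cannot be expressed as a formal
power series in `x₁^(1/m)` and `x₂^(1/m)`. -/
theorem no_sqrt_of_x1_add_x2 (k : Type*) [Field k] [CharZero k] (m : ℕ) (hm : 0 < m) :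
    ¬ ∃ f : MvPowerSeries (Fin 2) k,
        f ^ 2 = (MvPowerSeries.X 0 : MvPowerSeries (Fin 2) k) ^ m + (MvPowerSeries.X 1) ^ m := by
  rintro ⟨f, hf⟩
  open MvPolynomial in
  have hhom : (X 0 ^ m + X 1 ^ m : MvPolynomial (Fin 2) k).IsHomogeneous m :=
    (isHomogeneous_X_pow _ _).add (isHomogeneous_X_pow _ _)
  refine MvPolynomial.not_isSquare_X_pow_add_X_pow (Nat.cast_ne_zero.mpr hm.ne')
    (hhom.isSquare_of_isSquare_coe ⟨f, ?_⟩)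
  push_cast
  rw [← hf, sq]
end

section
/- Let ν be an Abhyankar valuation, P(Z) ∈ V^{fg}_ν[Z] a monic polynomial of degree d with no multiple factor, with irreducible monic factorization P = P_1 ⋯ P_r, roots z_1,...,z_d, and coefficients a_i. Let Q(Z) ∈ V^{fg}_ν[Z] be monic of degree d with coefficients b_i. If min_i ν(a_i − b_i) > d · max_{i≠j} ν(z_i − z_j), then Q factors as Q = Q_1 ⋯ Q_r with each Q_i monic irreducible in V^{fg}_ν[Z] and ν(Q_i − P_i) ≥ (min_i ν(a_i − b_i))/d (meaning every coefficient of Q_i − P_i has at least this valuation). -/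
/-!
Every root `zᵢ` of `P` is integral, so `v(Q(zᵢ)) = v((Q - P)(zᵢ)) ≥ c > d·M`. Writing `Q(zᵢ)` as
the product of the `zᵢ - y` over the roots `y` of `Q`, some root `yᵢ` satisfies `v(zᵢ - yᵢ) > M`.
By the ultrametric inequality a root of `Q` is that close to at most one `zᵢ`, so `i ↦ yᵢ`
enumerates the roots of `Q`, and the remaining factors of `Q(zᵢ)` give
`v(zᵢ - yᵢ) ≥ c - (d - 1)·M ≥ c/d`.

Since `v` is invariant under `Gal(K̄/K)`, an automorphism sends `zₖ` to `zₗ` iff it sends `yₖ`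
to `yₗ`. Hence if `zₖ` is a root of `Pᵢ`, then `Pᵢ = ∏ (X - zₗ)` and
`Qᵢ := minpoly (yₖ) = ∏ (X - yₗ)` over the same set of indices `l`, and the bound on `Qᵢ - Pᵢ`
follows factor by factor.
-/

open Polynomial

theorem Polynomial.aeval_eq_zero_of_map_eq_prod {K L ι : Type*} [CommRing K] [CommRing L]
    [Algebra K L] [Fintype ι] {p : K[X]} {z : ι → L}
    (hp : p.map (algebraMap K L) = ∏ i, (X - C (z i))) (i : ι) : aeval (z i) p = 0 := by
  rw [aeval_def, ← eval_map, hp, eval_prod]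
  exact Finset.prod_eq_zero (Finset.mem_univ i) (by simp)

theorem Polynomial.exists_eq_of_map_eq_prod {K L ι : Type*} [CommRing K] [CommRing L]
    [IsDomain L] [Algebra K L] [Fintype ι] {p : K[X]} {z : ι → L}
    (hp : p.map (algebraMap K L) = ∏ i, (X - C (z i))) {x : L} (hx : aeval x p = 0) :
    ∃ i, x = z i := by
  rw [aeval_def, ← eval_map, hp, eval_prod, Finset.prod_eq_zero_iff] at hx
  obtain ⟨i, -, hi⟩ := hx
  exact ⟨i, sub_eq_zero.mp (by simpa using hi)⟩

namespace AddValuation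

section OfReal

variable {K : Type*} [Field K] (w : K → ℝ)
  (hmul : ∀ x y : K, x ≠ 0 → y ≠ 0 → w (x * y) = w x + w y)
  (hadd : ∀ x y : K, x ≠ 0 → y ≠ 0 → x + y ≠ 0 → min (w x) (w y) ≤ w (x + y))

open Classical in
noncomputable def ofReal : AddValuation K (WithTop ℝ) :=
  AddValuation.of (fun x => if x = 0 then ⊤ else (w x : WithTop ℝ)) (if_pos rfl)
    (by
      have := hmul 1 1 one_ne_zero one_ne_zero
      simp_all)
    (fun x y => by
      by_cases hx : x = 0
      · simp [hx]
      by_cases hy : y = 0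
      · simp [hy]
      by_cases hxy : x + y = 0
      · simp [hxy]
      simp only [if_neg hx, if_neg hy, if_neg hxy]
      exact_mod_cast hadd x y hx hy hxy)
    (fun x y => by
      by_cases hx : x = 0
      · simp [hx]
      by_cases hy : y = 0
      · simp [hy]
      simp [hx, hy, hmul x y hx hy])

variable {w}

theorem ofReal_apply_of_ne_zero {x : K} (hx : x ≠ 0) : ofReal w hmul hadd x = w x :=
  if_neg hx

theorem coe_le_ofReal_algebraMap_iff {F : Type*} [Field F] [Algebra F K] {ν : F → ℝ}
    (hext : ∀ x : F, x ≠ 0 → w (algebraMap F K x) = ν x) {b : ℝ} {x : F} :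
    (b : WithTop ℝ) ≤ ofReal w hmul hadd (algebraMap F K x) ↔ x = 0 ∨ b ≤ ν x := by
  by_cases hx : x = 0
  · simp [hx]
  · rw [ofReal_apply_of_ne_zero hmul hadd ((_root_.map_ne_zero _).mpr hx), hext x hx]
    simp [hx]

end OfReal

section Coefficients

variable {R Γ₀ : Type*} [CommRing R] [LinearOrderedAddCommMonoidWithTop Γ₀]
  (v : AddValuation R Γ₀)

theorem map_multiset_prod (s : Multiset R) : v s.prod = (s.map v).sum := by
  induction s using Multiset.induction with
  | empty => simp
  | cons a s ih => simp [ih]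

theorem map_prod {ι : Type*} (s : Finset ι) (f : ι → R) :
    v (∏ i ∈ s, f i) = ∑ i ∈ s, v (f i) := by
  simpa using v.map_multiset_prod (s.val.map f)

theorem le_coeff_mul {p q : R[X]} {a b : Γ₀} (hp : ∀ n, a ≤ v (p.coeff n))
    (hq : ∀ n, b ≤ v (q.coeff n)) (n : ℕ) : a + b ≤ v ((p * q).coeff n) := by
  rw [coeff_mul]
  exact v.map_le_sum fun ij _ => (v.map_mul _ _).symm ▸ add_le_add (hp ij.1) (hq ij.2)

theorem nonneg_coeff_prod {ι : Type*} (s : Finset ι) (f : ι → R[X])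
    (hf : ∀ i ∈ s, ∀ n, 0 ≤ v ((f i).coeff n)) (n : ℕ) : 0 ≤ v ((∏ i ∈ s, f i).coeff n) := by
  classical
  induction s using Finset.induction generalizing n with
  | empty =>
    rw [Finset.prod_empty, coeff_one]
    split_ifs <;> simp
  | insert a s ha ih =>
    rw [Finset.prod_insert ha, ← add_zero (0 : Γ₀)]
    exact v.le_coeff_mul (hf a (Finset.mem_insert_self a s))
      (ih fun i hi => hf i (Finset.mem_insert_of_mem hi)) n

theorem le_coeff_prod_sub_prod {ι : Type*} (s : Finset ι) (f g : ι → R[X]) {b : Γ₀}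
    (hf : ∀ i ∈ s, ∀ n, 0 ≤ v ((f i).coeff n)) (hg : ∀ i ∈ s, ∀ n, 0 ≤ v ((g i).coeff n))
    (hfg : ∀ i ∈ s, ∀ n, b ≤ v ((f i - g i).coeff n)) (n : ℕ) :
    b ≤ v ((∏ i ∈ s, f i - ∏ i ∈ s, g i).coeff n) := by
  classical
  induction s using Finset.induction generalizing n with
  | empty => simp
  | insert a s ha ih =>
    have hs : ∀ i ∈ s, i ∈ insert a s := fun i hi => Finset.mem_insert_of_mem hi
    have ha' := Finset.mem_insert_self a s
    rw [Finset.prod_insert ha, Finset.prod_insert ha,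
      show ∀ x y x' y' : R[X], x * y - x' * y' = (y - y') * x + (x - x') * y' by intros; ring,
      coeff_add]
    refine v.map_le_add ?_ ?_
    · simpa using v.le_coeff_mul (ih (fun i hi => hf i (hs i hi)) (fun i hi => hg i (hs i hi))
        (fun i hi => hfg i (hs i hi))) (hf a ha') n
    · simpa using v.le_coeff_mul (hfg a ha')
        (v.nonneg_coeff_prod s g fun i hi => hg i (hs i hi)) n

theorem le_eval {p : R[X]} {b : Γ₀} (hp : ∀ n, b ≤ v (p.coeff n)) {x : R} (hx : 0 ≤ v x) :
    b ≤ v (p.eval x) := by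
  rw [eval_eq_sum_range]
  refine v.map_le_sum fun n _ => ?_
  rw [v.map_mul, v.map_pow]
  exact le_add_of_le_of_nonneg (hp n) (nsmul_nonneg hx n)

theorem nonneg_coeff_X_sub_C {x : R} (hx : 0 ≤ v x) (n : ℕ) : 0 ≤ v ((X - C x).coeff n) := by
  rw [coeff_sub, coeff_X, coeff_C]
  split_ifs <;> simp_all

end Coefficients

section Integral

variable {R Γ₀ : Type*} [CommRing R] [LinearOrderedAddCommGroupWithTop Γ₀]
  (v : AddValuation R Γ₀)

theorem mem_integer_toValuation_iff {x : R} : x ∈ (toValuation v).integer ↔ 0 ≤ v x := by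
  rw [Valuation.mem_integer_iff, toValuation_apply, ← ofAdd_zero, Multiplicative.ofAdd_le]
  exact OrderDual.toDual_le_toDual

theorem nonneg_of_isRoot {p : R[X]} (hp : p.Monic) (hcoeff : ∀ n, 0 ≤ v (p.coeff n)) {x : R}
    (hx : p.IsRoot x) : 0 ≤ v x := by
  have hlifts : p ∈ lifts (algebraMap (toValuation v).integer R) :=
    (lifts_iff_coeff_lifts p).mpr fun n =>
      ⟨⟨_, v.mem_integer_toValuation_iff.mpr (hcoeff n)⟩, rfl⟩
  obtain ⟨q, hq, -, hqm⟩ := lifts_and_natDegree_eq_and_monic hlifts hp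
  exact v.mem_integer_toValuation_iff.mp <| (Valuation.integer.integers _).mem_of_integral
    ⟨q, hqm, by rw [← eval_map, hq]; exact hx⟩

theorem nonneg_of_map_eq_prod {K ι : Type*} [CommRing K] [Algebra K R] [Fintype ι] {p : K[X]}
    {z : ι → R} (hp : p.map (algebraMap K R) = ∏ i, (X - C (z i)))
    (hcoeff : ∀ n, 0 ≤ v (algebraMap K R (p.coeff n))) (i : ι) : 0 ≤ v (z i) :=
  v.nonneg_of_isRoot (hp ▸ monic_prod_of_monic _ _ fun i _ => monic_X_sub_C (z i))
    (fun n => by rw [coeff_map]; exact hcoeff n)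
    (by rw [IsRoot, eval_map, ← aeval_def]; exact aeval_eq_zero_of_map_eq_prod hp i)

end Integral

section NearRoots

variable {L Γ₀ : Type*} [Field L] [LinearOrderedAddCommMonoidWithTop Γ₀] (v : AddValuation L Γ₀)

theorem exists_mem_roots_lt_map_sub {Q : L[X]} (hQ : Q.Monic) (hsplit : Q.Splits) {x : L}
    {M : Γ₀} (h : Multiset.card Q.roots • M < v (Q.eval x)) : ∃ a ∈ Q.roots, M < v (x - a) := by
  by_contra! hle
  rw [hsplit.eval_eq_prod_roots_of_monic hQ, v.map_multiset_prod, Multiset.map_map] at h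
  refine h.not_ge ((Multiset.sum_le_card_nsmul _ M ?_).trans_eq (by simp))
  simp only [Multiset.mem_map]
  rintro _ ⟨a, ha, rfl⟩
  exact hle a ha

theorem eq_of_lt_map_sub {ι : Type*} {z : ι → L} {M : Γ₀}
    (hM : ∀ i j, i ≠ j → v (z i - z j) ≤ M) {a : L} {i j : ι} (hi : M < v (z i - a))
    (hj : M < v (z j - a)) : i = j := by
  by_contra hij
  refine (hM i j hij).not_gt ?_
  rw [← sub_sub_sub_cancel_right (z i) (z j) a, sub_eq_add_neg]
  exact v.map_lt_add hi (by rwa [v.map_neg])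

theorem algEquiv_apply_eq_iff_of_near {K ι : Type*} [Field K] [Algebra K L] [Fintype ι]
    {P Q : K[X]} {z y : ι → L} (hz : Function.Injective z) (hy : Function.Injective y)
    (hPz : P.map (algebraMap K L) = ∏ i, (X - C (z i)))
    (hQy : Q.map (algebraMap K L) = ∏ i, (X - C (y i)))
    {M : Γ₀} (hM : ∀ i j, i ≠ j → v (z i - z j) ≤ M) (hnear : ∀ i, M < v (z i - y i))
    (σ : L ≃ₐ[K] L) (hσ : ∀ x, v (σ x) = v x) (k l : ι) :
    σ (z k) = z l ↔ σ (y k) = y l := by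
  obtain ⟨m, hm⟩ := exists_eq_of_map_eq_prod hPz (x := σ (z k))
    (by rw [aeval_algHom_apply, aeval_eq_zero_of_map_eq_prod hPz, _root_.map_zero])
  obtain ⟨m', hm'⟩ := exists_eq_of_map_eq_prod hQy (x := σ (y k))
    (by rw [aeval_algHom_apply, aeval_eq_zero_of_map_eq_prod hQy, _root_.map_zero])
  obtain rfl : m = m' :=
    v.eq_of_lt_map_sub hM (by rw [← hm, ← hm', ← _root_.map_sub, hσ]; exact hnear k) (hnear m')
  rw [hm, hm', hz.eq_iff, hy.eq_iff]

end NearRoots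

section RealValued

variable {L : Type*} [Field L] (v : AddValuation L (WithTop ℝ))

theorem div_le_map_sub_of_le_map_prod {d : ℕ} {x : L} {y : Fin d → L} {k : Fin d} {M c : ℝ}
    (hc : d * M < c) (hM : ∀ j, j ≠ k → v (x - y j) ≤ M)
    (h : (c : WithTop ℝ) ≤ v (∏ j, (x - y j))) : ((c / d : ℝ) : WithTop ℝ) ≤ v (x - y k) := by
  have hd : (1 : ℝ) ≤ d := by exact_mod_cast k.pos
  have hrest : ∑ j ∈ Finset.univ.erase k, v (x - y j) ≤ (((d - 1) * M : ℝ) : WithTop ℝ) := by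
    calc _ ≤ (Finset.univ.erase k).card • (M : WithTop ℝ) :=
          Finset.sum_le_card_nsmul _ _ _ fun j hj => hM j (Finset.ne_of_mem_erase hj)
      _ = _ := by
          rw [Finset.card_erase_of_mem (Finset.mem_univ k), Finset.card_univ, Fintype.card_fin,
            ← WithTop.coe_nsmul, nsmul_eq_mul, Nat.cast_pred k.pos]
  rw [v.map_prod, ← Finset.add_sum_erase _ _ (Finset.mem_univ k)] at h
  have hlow : (((c - (d - 1) * M) : ℝ) : WithTop ℝ) ≤ v (x - y k) := by
    have := h.trans (add_le_add_right hrest _)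
    generalize v (x - y k) = a at this ⊢
    induction a using WithTop.recTopCoe with
    | top => exact le_top
    | coe a =>
      rw [← WithTop.coe_add, WithTop.coe_le_coe] at this
      rw [WithTop.coe_le_coe]
      linarith
  refine le_trans ?_ hlow
  have hdiv : d * (c / d) = c := mul_div_cancel₀ c (by positivity)
  have hMc : M < c / d := by rw [lt_div_iff₀ (by positivity)]; linarith
  exact_mod_cast (by nlinarith [mul_nonneg (sub_nonneg.mpr hd) (sub_nonneg.mpr hMc.le)] :
    c / d ≤ c - (d - 1) * M)

theorem exists_eq_prod_X_sub_C_near {d : ℕ} {z : Fin d → L} {M c : ℝ}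
    (hM : ∀ i j, i ≠ j → v (z i - z j) ≤ M) (hc : d * M < c) {Q : L[X]}
    (hQ : Q.Monic) (hsplit : Q.Splits) (hdeg : Q.natDegree = d)
    (hQz : ∀ i, (c : WithTop ℝ) ≤ v (Q.eval (z i))) :
    ∃ y : Fin d → L, Q = ∏ i, (X - C (y i)) ∧
      ∀ i, (M : WithTop ℝ) < v (z i - y i) ∧ ((c / d : ℝ) : WithTop ℝ) ≤ v (z i - y i) := by
  have hcard : Multiset.card Q.roots = d := (splits_iff_card_roots.mp hsplit).trans hdeg
  have hdM : Multiset.card Q.roots • (M : WithTop ℝ) < c := by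
    rw [hcard, ← WithTop.coe_nsmul, nsmul_eq_mul]
    exact_mod_cast hc
  choose y hy_mem hy_near using fun i =>
    v.exists_mem_roots_lt_map_sub hQ hsplit (hdM.trans_le (hQz i))
  have hy : Function.Injective y := fun i j hij =>
    v.eq_of_lt_map_sub hM (hy_near i) (hij ▸ hy_near j)
  have hroots : Finset.univ.val.map y = Q.roots := by
    refine Multiset.eq_of_le_of_card_le ?_ (by simp [hcard])
    rw [Multiset.le_iff_subset (Finset.univ.nodup.map hy)]
    intro a ha
    obtain ⟨i, -, rfl⟩ := Multiset.mem_map.mp ha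
    exact hy_mem i
  have hQy : Q = ∏ i, (X - C (y i)) := by
    rw [hsplit.eq_prod_roots_of_monic hQ, ← hroots, Multiset.map_map]
    rfl
  refine ⟨y, hQy, fun i => ⟨hy_near i, v.div_le_map_sub_of_le_map_prod hc (fun j hji => ?_) ?_⟩⟩
  · by_contra! h
    exact hji (v.eq_of_lt_map_sub hM (hy_near j) h)
  · simpa [hQy, eval_prod] using hQz i

end RealValued

end AddValuation

section Conjugates

variable {K L ι : Type*} [Field K] [Field L] [Algebra K L] [Fintype ι]

open Classical in
theorem minpoly_map_eq_prod_filter_isConjRoot [PerfectField K] [IsAlgClosed L] {p : K[X]}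
    {y : ι → L} (hy : Function.Injective y) (hp : p.map (algebraMap K L) = ∏ i, (X - C (y i)))
    (k : ι) : (minpoly K (y k)).map (algebraMap K L) =
      ∏ l ∈ Finset.univ.filter (fun l => IsConjRoot K (y k) (y l)), (X - C (y l)) := by
  have hp0 : p ≠ 0 := by
    rintro rfl
    exact (monic_prod_of_monic _ _ fun i _ => monic_X_sub_C (y i)).ne_zero
      (by rw [← hp, Polynomial.map_zero])
  have hyk : aeval (y k) p = 0 := aeval_eq_zero_of_map_eq_prod hp k
  have hint : IsIntegral K (y k) := (show IsAlgebraic K (y k) from ⟨p, hp0, hyk⟩).isIntegral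
  have hsep : ((minpoly K (y k)).map (algebraMap K L)).Separable :=
    (PerfectField.separable_of_irreducible (minpoly.irreducible hint)).map
  rw [(IsAlgClosed.splits _).eq_prod_roots_of_monic ((minpoly.monic hint).map _)]
  suffices h : ((minpoly K (y k)).map (algebraMap K L)).roots =
      (Finset.univ.filter fun l => IsConjRoot K (y k) (y l)).val.map y by
    rw [h, Multiset.map_map]
    rfl
  refine (Multiset.Nodup.ext (nodup_roots hsep) (Finset.nodup _ |>.map hy)).mpr fun x => ?_
  rw [← aroots_def, ← isConjRoot_iff_mem_minpoly_aroots hint]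
  simp only [Multiset.mem_map, Finset.mem_val, Finset.mem_filter, Finset.mem_univ, true_and]
  constructor
  · intro hx
    obtain ⟨l, rfl⟩ := exists_eq_of_map_eq_prod hp (minpoly.dvd_iff.mp (hx ▸ minpoly.dvd K _ hyk))
    exact ⟨l, hx, rfl⟩
  · rintro ⟨l, hl, rfl⟩
    exact hl

open Classical in
theorem exists_minpoly_map_eq_prod_X_sub_C_of_apply_eq_iff [PerfectField K] [IsAlgClosure K L]
    {P Q : K[X]} {z y : ι → L} (hz : Function.Injective z) (hy : Function.Injective y)
    (hPz : P.map (algebraMap K L) = ∏ i, (X - C (z i)))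
    (hQy : Q.map (algebraMap K L) = ∏ i, (X - C (y i)))
    (hzy : ∀ (σ : L ≃ₐ[K] L) k l, σ (z k) = z l ↔ σ (y k) = y l) (k : ι) :
    ∃ S : Finset ι, (minpoly K (z k)).map (algebraMap K L) = ∏ l ∈ S, (X - C (z l)) ∧
      (minpoly K (y k)).map (algebraMap K L) = ∏ l ∈ S, (X - C (y l)) := by
  have := IsAlgClosure.isAlgClosed (R := K) (K := L)
  have := IsAlgClosure.normal K L
  refine ⟨_, minpoly_map_eq_prod_filter_isConjRoot hz hPz k, ?_⟩
  rw [minpoly_map_eq_prod_filter_isConjRoot hy hQy k]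
  refine Finset.prod_congr (Finset.filter_congr fun l _ => ?_) fun _ _ => rfl
  simp only [isConjRoot_iff_exists_algEquiv, hzy]

theorem Polynomial.exists_eq_minpoly_of_dvd [IsAlgClosed L] {P F : K[X]} {z : ι → L}
    (hPz : P.map (algebraMap K L) = ∏ i, (X - C (z i))) (hF : Irreducible F) (hFm : F.Monic)
    (hFP : F ∣ P) : ∃ k, F = minpoly K (z k) := by
  obtain ⟨x, hx⟩ := IsAlgClosed.exists_aeval_eq_zero L F (degree_pos_of_irreducible hF).ne'
  obtain ⟨k, rfl⟩ := exists_eq_of_map_eq_prod hPz (aeval_eq_zero_of_dvd_aeval_eq_zero hFP hx)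
  exact ⟨k, minpoly.eq_of_irreducible_of_monic hF hx hFm⟩

end Conjugates

theorem Multiset.prod_map_finset_sum {ι κ M : Type*} [CommMonoid M] (s : Finset ι)
    (m : ι → Multiset κ) (g : κ → M) :
    ((∑ i ∈ s, m i).map g).prod = ∏ i ∈ s, ((m i).map g).prod := by
  classical
  induction s using Finset.induction with
  | empty => simp
  | insert a s ha ih => simp [Finset.sum_insert ha, Finset.prod_insert ha, ih]

theorem Finset.prod_prod_eq_prod_of_prod_X_sub_C_eq {ι κ R M : Type*} [CommRing R] [IsDomain R]
    [Fintype κ] [CommMonoid M] {s : Finset ι} {S : ι → Finset κ} {z : κ → R}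
    (hz : Function.Injective z)
    (h : ∏ i ∈ s, ∏ l ∈ S i, (X - C (z l)) = ∏ l, (X - C (z l))) (f : κ → M) :
    ∏ i ∈ s, ∏ l ∈ S i, f l = ∏ l, f l := by
  have hsum : ∑ i ∈ s, (S i).val = Finset.univ.val := by
    apply Multiset.map_injective hz
    rw [← roots_multiset_prod_X_sub_C ((∑ i ∈ s, (S i).val).map z),
      ← roots_multiset_prod_X_sub_C (Finset.univ.val.map z), Multiset.map_map, Multiset.map_map,
      Multiset.prod_map_finset_sum]
    exact congrArg roots h
  calc ∏ i ∈ s, ∏ l ∈ S i, f l = ((∑ i ∈ s, (S i).val).map f).prod :=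
        (Multiset.prod_map_finset_sum _ _ _).symm
    _ = ∏ l, f l := by rw [hsum]; rfl

theorem exists_factorization_near_of_coeff_near {K L ι : Type*} [Field K] [PerfectField K] [Field L]
    [Algebra K L] [IsAlgClosure K L] [Fintype ι]
    (v : AddValuation L (WithTop ℝ)) (hv : ∀ (σ : L ≃ₐ[K] L) x, v (σ x) = v x)
    {d : ℕ} {P Q : K[X]} {Pfac : ι → K[X]} (hPfac : P = ∏ i, Pfac i)
    (hPfac_irr : ∀ i, Irreducible (Pfac i)) (hPfac_monic : ∀ i, (Pfac i).Monic)
    {z : Fin d → L} (hz : Function.Injective z)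
    (hPz : P.map (algebraMap K L) = ∏ i, (X - C (z i)))
    (hPint : ∀ n, 0 ≤ v (algebraMap K L (P.coeff n)))
    (hQ : Q.Monic) (hQdeg : Q.natDegree = d) (hQint : ∀ n, 0 ≤ v (algebraMap K L (Q.coeff n)))
    {M c : ℝ} (hM : ∀ i j, i ≠ j → v (z i - z j) ≤ M) (hc : d * M < c)
    (hPQ : ∀ n, (c : WithTop ℝ) ≤ v (algebraMap K L ((Q - P).coeff n))) :
    ∃ Qfac : ι → K[X], Q = ∏ i, Qfac i ∧ ∀ i, (Qfac i).Monic ∧ Irreducible (Qfac i) ∧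
      (∀ n, 0 ≤ v (algebraMap K L ((Qfac i).coeff n))) ∧
      ∀ n, ((c / d : ℝ) : WithTop ℝ) ≤ v (algebraMap K L ((Qfac i - Pfac i).coeff n)) := by
  have := IsAlgClosure.isAlgClosed (R := K) (K := L)
  have hzint := v.nonneg_of_map_eq_prod hPz hPint
  have hQz : ∀ i, (c : WithTop ℝ) ≤ v ((Q.map (algebraMap K L)).eval (z i)) := fun i => by
    have hPzi := aeval_eq_zero_of_map_eq_prod hPz i
    rw [aeval_def, ← eval_map] at hPzi
    rw [← sub_zero (eval _ _), ← hPzi, ← eval_sub, ← Polynomial.map_sub]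
    exact v.le_eval (fun n => by rw [coeff_map]; exact hPQ n) (hzint i)
  obtain ⟨y, hQy, hnear⟩ := v.exists_eq_prod_X_sub_C_near hM hc (hQ.map _)
    (IsAlgClosed.splits _) (by rw [natDegree_map, hQdeg]) hQz
  have hy : Function.Injective y := fun i j hij =>
    v.eq_of_lt_map_sub hM (hnear i).1 (hij ▸ (hnear j).1)
  have hyint := v.nonneg_of_map_eq_prod hQy hQint
  have hzy := fun σ => v.algEquiv_apply_eq_iff_of_near hz hy hPz hQy hM (fun i => (hnear i).1) σ
    (hv σ)
  choose k hk using fun i => exists_eq_minpoly_of_dvd hPz (hPfac_irr i) (hPfac_monic i)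
    (hPfac ▸ Finset.dvd_prod_of_mem Pfac (Finset.mem_univ i))
  choose S hSz hSy using fun i =>
    exists_minpoly_map_eq_prod_X_sub_C_of_apply_eq_iff hz hy hPz hQy hzy (k i)
  have hyk : ∀ i, IsIntegral K (y (k i)) := fun i => ⟨Q, hQ, aeval_eq_zero_of_map_eq_prod hQy _⟩
  refine ⟨fun i => minpoly K (y (k i)), ?_, fun i =>
    ⟨minpoly.monic (hyk i), minpoly.irreducible (hyk i), fun n => ?_, fun n => ?_⟩⟩
  · apply map_injective _ (algebraMap K L).injective
    rw [hQy, Polynomial.map_prod, Finset.prod_congr rfl fun i _ => hSy i]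
    refine (Finset.prod_prod_eq_prod_of_prod_X_sub_C_eq hz ?_ _).symm
    rw [← hPz, hPfac, Polynomial.map_prod]
    exact Finset.prod_congr rfl fun i _ => by rw [hk i, hSz i]
  · rw [← coeff_map, hSy i]
    exact v.nonneg_coeff_prod _ _ (fun l _ => v.nonneg_coeff_X_sub_C (hyint l)) n
  · rw [← coeff_map, Polynomial.map_sub, hSy i, hk i, hSz i]
    refine v.le_coeff_prod_sub_prod _ _ _ (fun l _ => v.nonneg_coeff_X_sub_C (hyint l))
      (fun l _ => v.nonneg_coeff_X_sub_C (hzint l)) (fun l _ m => ?_) n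
    rw [sub_sub_sub_cancel_left, ← C_sub, coeff_C]
    split_ifs
    · exact (hnear l).2
    · simp

/-- `Kfg` is the fraction field `K^{fg}_ν` of `V^{fg}_ν`, so "coefficients in `V^{fg}_ν`" is
encoded as "coefficients of nonnegative valuation". -/
theorem approximate_polynomial_factors_like_general
    {Kfg Kbar : Type*} [Field Kfg] [CharZero Kfg] [Field Kbar] [Algebra Kfg Kbar]
    [IsAlgClosure Kfg Kbar]
    (ν : Kfg → ℝ)
    (w : Kbar → ℝ)
    (hw_mul : ∀ x y : Kbar, x ≠ 0 → y ≠ 0 → w (x * y) = w x + w y)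
    (hw_add : ∀ x y : Kbar, x ≠ 0 → y ≠ 0 → x + y ≠ 0 → min (w x) (w y) ≤ w (x + y))
    (hw_ext : ∀ x : Kfg, x ≠ 0 → w (algebraMap Kfg Kbar x) = ν x)
    (hw_aut : ∀ σ : Kbar ≃ₐ[Kfg] Kbar, ∀ z : Kbar, z ≠ 0 → w (σ z) = w z)
    (d r : ℕ)
    (P Q : Polynomial Kfg)
    (hPint : ∀ j, P.coeff j = 0 ∨ 0 ≤ ν (P.coeff j))
    (hPsf : Squarefree P)
    (Pfac : Fin r → Polynomial Kfg)
    (hPfac : P = ∏ i, Pfac i)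
    (hPfacm : ∀ i, (Pfac i).Monic ∧ Irreducible (Pfac i) ∧
      ∀ j, (Pfac i).coeff j = 0 ∨ 0 ≤ ν ((Pfac i).coeff j))
    (z : Fin d → Kbar)
    (hroots : P.map (algebraMap Kfg Kbar) = ∏ i, (Polynomial.X - Polynomial.C (z i)))
    (hQmonic : Q.Monic) (hQdeg : Q.natDegree = d)
    (hQint : ∀ j, Q.coeff j = 0 ∨ 0 ≤ ν (Q.coeff j))
    (c M : ℝ)
    (hM : ∀ i j, i ≠ j → w (z i - z j) ≤ M)
    (hc : (d : ℝ) * M < c)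
    (hclose : ∀ j, P.coeff j = Q.coeff j ∨ c ≤ ν (P.coeff j - Q.coeff j)) :
    ∃ Qfac : Fin r → Polynomial Kfg,
      Q = ∏ i, Qfac i ∧
      ∀ i, (Qfac i).Monic ∧ Irreducible (Qfac i) ∧
        (∀ j, (Qfac i).coeff j = 0 ∨ 0 ≤ ν ((Qfac i).coeff j)) ∧
        (∀ j, (Qfac i).coeff j = (Pfac i).coeff j ∨
          c / d ≤ ν ((Qfac i).coeff j - (Pfac i).coeff j)) := by
  set v := AddValuation.ofReal w hw_mul hw_add
  have hv_ext (b : ℝ) (x : Kfg) : (b : WithTop ℝ) ≤ v (algebraMap Kfg Kbar x) ↔ x = 0 ∨ b ≤ ν x :=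
    AddValuation.coe_le_ofReal_algebraMap_iff hw_mul hw_add hw_ext
  have hv_aut (σ : Kbar ≃ₐ[Kfg] Kbar) (x : Kbar) : v (σ x) = v x := by
    by_cases hx : x = 0
    · simp [hx]
    · rw [AddValuation.ofReal_apply_of_ne_zero _ _ hx,
        AddValuation.ofReal_apply_of_ne_zero _ _ ((_root_.map_ne_zero σ).mpr hx), hw_aut σ x hx]
  have hz : Function.Injective z := separable_prod_X_sub_C_iff.mp
    (hroots ▸ (PerfectField.separable_iff_squarefree.mpr hPsf).map)
  obtain ⟨Qfac, hQ, hQfac⟩ := exists_factorization_near_of_coeff_near v hv_aut hPfac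
    (fun i => (hPfacm i).2.1) (fun i => (hPfacm i).1) hz hroots (fun n => by exact_mod_cast (hv_ext 0 _).mpr (hPint n))
    hQmonic hQdeg (fun n => by exact_mod_cast (hv_ext 0 _).mpr (hQint n))
    (fun i j hij => by
      rw [AddValuation.ofReal_apply_of_ne_zero _ _ (sub_ne_zero.mpr (hz.ne hij))]
      exact_mod_cast hM i j hij) hc
    (fun n => by
      rw [coeff_sub, ← neg_sub, map_neg, AddValuation.map_neg, hv_ext, sub_eq_zero]
      exact hclose n)
  refine ⟨Qfac, hQ, fun i => ⟨(hQfac i).1, (hQfac i).2.1, fun n => ?_, fun n => ?_⟩⟩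
  · exact (hv_ext 0 _).mp (by exact_mod_cast (hQfac i).2.2.1 n)
  · rw [← sub_eq_zero, ← coeff_sub]
    exact (hv_ext _ _).mp ((hQfac i).2.2.2 n)

/-- **Proposition (continuity of the irreducible factorization).**
Here `Kfg` denotes the fraction field `K^{fg}_ν` of the ring `V^{fg}_ν` of elements of the
completed valuation ring whose `ν`-support lies in a finitely generated sub-semigroup of
`ℝ_{≥0}`; `V^{fg}_ν` is its valuation ring, so "coefficients in `V^{fg}_ν`" means
coefficients of nonnegative valuation.  `Kbar` is an algebraic closure, `w` the extension of
`ν` (which is invariant under `Kfg`-automorphisms of `Kbar`, as holds in this setting).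

Let `P(Z) ∈ V^{fg}_ν[Z]` be a monic polynomial of degree `d` with no multiple factor, with
irreducible monic factorization `P = P₁ ⋯ P_r` in `V^{fg}_ν[Z]` and roots `z₁,...,z_d`.
Let `Q(Z) ∈ V^{fg}_ν[Z]` be monic of degree `d` with `min_i ν(aᵢ − bᵢ) ≥ c` for some
`c > d · max_{i≠j} ν(zᵢ − z_j)`.  Then `Q = Q₁ ⋯ Q_r` with each `Qᵢ ∈ V^{fg}_ν[Z]` monic
irreducible and every coefficient of `Qᵢ − Pᵢ` of valuation at least `c/d`. -/
theorem approximate_polynomial_factors_like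
    {Kfg Kbar : Type*} [Field Kfg] [CharZero Kfg] [Field Kbar] [Algebra Kfg Kbar]
    [IsAlgClosure Kfg Kbar]
    (ν : Kfg → ℝ)
    (hν_mul : ∀ x y : Kfg, x ≠ 0 → y ≠ 0 → ν (x * y) = ν x + ν y)
    (hν_add : ∀ x y : Kfg, x ≠ 0 → y ≠ 0 → x + y ≠ 0 → min (ν x) (ν y) ≤ ν (x + y))
    (w : Kbar → ℝ)
    (hw_mul : ∀ x y : Kbar, x ≠ 0 → y ≠ 0 → w (x * y) = w x + w y)
    (hw_add : ∀ x y : Kbar, x ≠ 0 → y ≠ 0 → x + y ≠ 0 → min (w x) (w y) ≤ w (x + y))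
    (hw_ext : ∀ x : Kfg, x ≠ 0 → w (algebraMap Kfg Kbar x) = ν x)
    (hw_aut : ∀ σ : Kbar ≃ₐ[Kfg] Kbar, ∀ z : Kbar, z ≠ 0 → w (σ z) = w z)
    (d r : ℕ) (hd : 0 < d)
    (P Q : Polynomial Kfg)
    (hPmonic : P.Monic) (hPdeg : P.natDegree = d)
    (hPint : ∀ j, P.coeff j = 0 ∨ 0 ≤ ν (P.coeff j))
    (hPsf : Squarefree P)
    (Pfac : Fin r → Polynomial Kfg)
    (hPfac : P = ∏ i, Pfac i)
    (hPfacm : ∀ i, (Pfac i).Monic ∧ Irreducible (Pfac i) ∧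
      ∀ j, (Pfac i).coeff j = 0 ∨ 0 ≤ ν ((Pfac i).coeff j))
    (z : Fin d → Kbar)
    (hroots : P.map (algebraMap Kfg Kbar) = ∏ i, (Polynomial.X - Polynomial.C (z i)))
    (hQmonic : Q.Monic) (hQdeg : Q.natDegree = d)
    (hQint : ∀ j, Q.coeff j = 0 ∨ 0 ≤ ν (Q.coeff j))
    (c M : ℝ)
    (hM : ∀ i j, i ≠ j → w (z i - z j) ≤ M)
    (hc : (d : ℝ) * M < c)
    (hclose : ∀ j, P.coeff j = Q.coeff j ∨ c ≤ ν (P.coeff j - Q.coeff j)) :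
    ∃ Qfac : Fin r → Polynomial Kfg,
      Q = ∏ i, Qfac i ∧
      ∀ i, (Qfac i).Monic ∧ Irreducible (Qfac i) ∧
        (∀ j, (Qfac i).coeff j = 0 ∨ 0 ≤ ν ((Qfac i).coeff j)) ∧
        (∀ j, (Qfac i).coeff j = (Pfac i).coeff j ∨
          c / d ≤ ν ((Qfac i).coeff j - (Pfac i).coeff j)) :=
  approximate_polynomial_factors_like_general ν w hw_mul hw_add hw_ext hw_aut d r P Q hPint hPsf
    Pfac hPfac hPfacm z hroots hQmonic hQdeg hQint c M hM hc hclose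
end

section
/- Let α, α' ∈ (R_{>0})^n. Every (α)-weighted-homogeneous polynomial in k[x1,...,xn] is (α')-weighted-homogeneous if and only if Rel_α ⊆ Rel_{α'}, where Rel_α is the kernel of the Q-linear map Q^n → R sending q to Σ_i α_i q_i. Moreover, if α' ∈ Rel(α, q, ε) (i.e., Rel_α ⊆ Rel_{α'} and |q − α'_i/α_i| < qε for all i) and a(x) is (α)-homogeneous, then q(1−ε)·ν_α(a) ≤ ν_{α'}(a) ≤ q(1+ε)·ν_α(a). -/
open scoped BigOperators

/-- `p` is `(α)`-weighted-homogeneous of weight `w`: all exponents of nonzero monomials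
of `p` have `α`-weight `w`. -/
def IsWeightedHomog {n : ℕ} {k : Type*} [CommSemiring k] (α : Fin n → ℝ) (w : ℝ)
    (p : MvPolynomial (Fin n) k) : Prop :=
  ∀ d ∈ p.support, ∑ i, α i * (d i : ℝ) = w

/-- `Rel_α`: the kernel of the `ℚ`-linear map `ℚⁿ → ℝ`, `q ↦ Σ αᵢ qᵢ`. -/
def RelSet {n : ℕ} (α : Fin n → ℝ) : Set (Fin n → ℚ) :=
  {q | ∑ i, α i * (q i : ℝ) = 0}

/-!
Two exponent vectors `A`, `B` have the same `α`-weight exactly when the rational vector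
`A - B` lies in `Rel_α`, and after clearing denominators every element of `Rel_α` is a multiple
of such a difference. Since `x^A + x^B` is `(α)`-homogeneous iff `A` and `B` have the same
`α`-weight, both conditions of the equivalence say that equal `α`-weight forces equal
`α'`-weight. The valuation bounds hold monomial by monomial, because
`q(1 - ε)αᵢ < α'ᵢ < q(1 + ε)αᵢ` for every `i` and exponents are nonnegative.
-/

open MvPolynomial

section

variable {n : ℕ}

def monomialValuation (β : Fin n → ℝ) (d : Fin n →₀ ℕ) : ℝ :=
  ∑ i, β i * (d i : ℝ)

theorem natSub_mem_relSet_iff (β : Fin n → ℝ) (A B : Fin n →₀ ℕ) :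
    (fun i => (A i : ℚ) - B i) ∈ RelSet β ↔ monomialValuation β A = monomialValuation β B := by
  simp only [RelSet, Set.mem_ofPred_eq, monomialValuation, Rat.cast_sub, Rat.cast_natCast,
    mul_sub, Finset.sum_sub_distrib, sub_eq_zero]

theorem smul_mem_relSet_iff (β : Fin n → ℝ) {c : ℚ} (hc : c ≠ 0) (q : Fin n → ℚ) :
    c • q ∈ RelSet β ↔ q ∈ RelSet β := by
  simp only [RelSet, Set.mem_ofPred_eq, Pi.smul_apply, smul_eq_mul, Rat.cast_mul,
    mul_left_comm _ (c : ℝ), ← Finset.mul_sum, mul_eq_zero, Rat.cast_eq_zero, hc, false_or]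

theorem exists_smul_eq_natSub (q : Fin n → ℚ) :
    ∃ c : ℚ, c ≠ 0 ∧ ∃ A B : Fin n →₀ ℕ, c • q = fun i => (A i : ℚ) - B i := by
  obtain ⟨b, hb⟩ := IsLocalization.exist_integer_multiples_of_finite (nonZeroDivisors ℤ) q
  choose z hz using hb
  refine ⟨b, by exact_mod_cast nonZeroDivisors.coe_ne_zero b,
    Finsupp.equivFunOnFinite.symm fun i => (z i).toNat,
    Finsupp.equivFunOnFinite.symm fun i => (-z i).toNat, funext fun i => ?_⟩
  have hzi : ((z i).toNat : ℚ) - ((-z i).toNat : ℚ) = z i := by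
    exact_mod_cast Int.toNat_sub_toNat_neg (z i)
  have hbq : (b : ℚ) * q i = z i := by simpa [zsmul_eq_mul] using (hz i).symm
  simpa [hzi] using hbq

theorem relSet_subset_iff_monomialValuation_eq (α α' : Fin n → ℝ) :
    RelSet α ⊆ RelSet α' ↔ ∀ A B : Fin n →₀ ℕ,
      monomialValuation α A = monomialValuation α B →
        monomialValuation α' A = monomialValuation α' B := by
  refine ⟨fun hrel A B h => ?_, fun h q hq => ?_⟩
  · exact (natSub_mem_relSet_iff α' A B).1 (hrel ((natSub_mem_relSet_iff α A B).2 h))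
  · obtain ⟨c, hc, A, B, hAB⟩ := exists_smul_eq_natSub q
    rw [← smul_mem_relSet_iff α hc, hAB, natSub_mem_relSet_iff] at hq
    rw [← smul_mem_relSet_iff α' hc, hAB, natSub_mem_relSet_iff]
    exact h A B hq

theorem forall_isWeightedHomog_imp_iff (k : Type*) [CommSemiring k] [Nontrivial k]
    (α α' : Fin n → ℝ) :
    (∀ p : MvPolynomial (Fin n) k,
        (∃ w, IsWeightedHomog α w p) → ∃ w', IsWeightedHomog α' w' p) ↔
      ∀ A B : Fin n →₀ ℕ, monomialValuation α A = monomialValuation α B →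
        monomialValuation α' A = monomialValuation α' B := by
  constructor
  · intro h A B hAB
    rcases eq_or_ne A B with rfl | hne
    · rfl
    have hsupp : (monomial A (1 : k) + monomial B 1).support = {A, B} :=
      Finsupp.support_single_add_single hne one_ne_zero one_ne_zero
    obtain ⟨w', hw'⟩ := h (monomial A 1 + monomial B 1)
      ⟨monomialValuation α A, fun d hd => by
        rcases Finset.mem_insert.1 (hsupp ▸ hd) with rfl | hd
        · rfl
        · rw [Finset.mem_singleton.1 hd]; exact hAB.symm⟩
    exact (hw' A (by simp [hsupp])).trans (hw' B (by simp [hsupp])).symm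
  · rintro h p ⟨w, hw⟩
    rcases p.support.eq_empty_or_nonempty with hp | ⟨d₀, hd₀⟩
    · exact ⟨0, by simp [IsWeightedHomog, hp]⟩
    · exact ⟨monomialValuation α' d₀, fun d hd => h d d₀ ((hw d hd).trans (hw d₀ hd₀).symm)⟩

theorem monomialValuation_smul (c : ℝ) (β : Fin n → ℝ) (d : Fin n →₀ ℕ) :
    monomialValuation (c • β) d = c * monomialValuation β d := by
  simp only [monomialValuation, Pi.smul_apply, smul_eq_mul, Finset.mul_sum, mul_assoc]

theorem monomialValuation_mono {β β' : Fin n → ℝ} (h : ∀ i, β i ≤ β' i) (d : Fin n →₀ ℕ) :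
    monomialValuation β d ≤ monomialValuation β' d :=
  Finset.sum_le_sum fun i _ => mul_le_mul_of_nonneg_right (h i) (Nat.cast_nonneg _)

theorem mul_lt_and_lt_mul_of_abs_sub_div_lt {q ε a b : ℝ} (ha : 0 < a)
    (h : |q - b / a| < q * ε) : q * (1 - ε) * a < b ∧ b < q * (1 + ε) * a := by
  rw [abs_sub_lt_iff] at h
  constructor
  · rw [← lt_div_iff₀ ha]; linarith
  · rw [← div_lt_iff₀ ha]; linarith

theorem monomialValuation_bounds_of_abs_sub_div_lt {α α' : Fin n → ℝ} (hα : ∀ i, 0 < α i)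
    {q ε : ℝ} (h : ∀ i, |q - α' i / α i| < q * ε) (d : Fin n →₀ ℕ) :
    q * (1 - ε) * monomialValuation α d ≤ monomialValuation α' d ∧
      monomialValuation α' d ≤ q * (1 + ε) * monomialValuation α d := by
  have hbounds i := mul_lt_and_lt_mul_of_abs_sub_div_lt (hα i) (h i)
  rw [← monomialValuation_smul, ← monomialValuation_smul]
  exact ⟨monomialValuation_mono (fun i => (hbounds i).1.le) d,
    monomialValuation_mono (fun i => (hbounds i).2.le) d⟩

end

theorem rel_homog_iff_and_valuation_bounds_general (n : ℕ) (k : Type*) [Field k]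
    (α α' : Fin n → ℝ) (hα : ∀ i, 0 < α i) :
    ((∀ p : MvPolynomial (Fin n) k,
        (∃ w, IsWeightedHomog α w p) → ∃ w', IsWeightedHomog α' w' p) ↔
      RelSet α ⊆ RelSet α') ∧
    (∀ (q : ℕ) (ε : ℝ), 0 < ε →
      (∀ i, ∃ m : ℕ, 0 < m ∧ α' i = m) →
      RelSet α ⊆ RelSet α' →
      (∀ i, |(q : ℝ) - α' i / α i| < q * ε) →
      ∀ (a : MvPolynomial (Fin n) k) (w w' : ℝ), a ≠ 0 →
        IsWeightedHomog α w a → IsWeightedHomog α' w' a →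
        (q : ℝ) * (1 - ε) * w ≤ w' ∧ w' ≤ (q : ℝ) * (1 + ε) * w) := by
  refine ⟨(forall_isWeightedHomog_imp_iff k α α').trans
    (relSet_subset_iff_monomialValuation_eq α α').symm, ?_⟩
  intro q ε _ _ _ hclose a w w' ha hw hw'
  obtain ⟨d, hd⟩ := support_nonempty.2 ha
  rw [← hw d hd, ← hw' d hd]
  exact monomialValuation_bounds_of_abs_sub_div_lt hα hclose d

/-- **Lemma.**  (1) Every `(α)`-weighted-homogeneous polynomial is `(α')`-weighted-homogeneous
iff `Rel_α ⊆ Rel_{α'}`.  (2) If moreover `α' ∈ Rel(α,q,ε)` (so `α'` has positive natural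
entries, `Rel_α ⊆ Rel_{α'}` and `|q − α'ᵢ/αᵢ| < qε` for all `i`), then for every nonzero
`(α)`-homogeneous polynomial `a` one has `q(1−ε)·ν_α(a) ≤ ν_{α'}(a) ≤ q(1+ε)·ν_α(a)`. -/
theorem rel_homog_iff_and_valuation_bounds (n : ℕ) (k : Type*) [Field k] [CharZero k]
    (α α' : Fin n → ℝ) (hα : ∀ i, 0 < α i) (hα' : ∀ i, 0 < α' i) :
    ((∀ p : MvPolynomial (Fin n) k,
        (∃ w, IsWeightedHomog α w p) → ∃ w', IsWeightedHomog α' w' p) ↔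
      RelSet α ⊆ RelSet α') ∧
    (∀ (q : ℕ) (ε : ℝ), 0 < ε →
      (∀ i, ∃ m : ℕ, 0 < m ∧ α' i = m) →
      RelSet α ⊆ RelSet α' →
      (∀ i, |(q : ℝ) - α' i / α i| < q * ε) →
      ∀ (a : MvPolynomial (Fin n) k) (w w' : ℝ), a ≠ 0 →
        IsWeightedHomog α w a → IsWeightedHomog α' w' a →
        (q : ℝ) * (1 - ε) * w ≤ w' ∧ w' ≤ (q : ℝ) * (1 + ε) * w) :=
  rel_homog_iff_and_valuation_bounds_general n k α α' hα
end

section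
/- Let α ∈ N^n and θ ∈ C[x1,...,xn] an (α)-weighted homogeneous polynomial of degree d = ν_α(θ). Then there exists a constant C' > 0 such that |θ(x)| ≥ C' · d_α(x, θ^{-1}(0))^d for all x ∈ C^n, where d_α(x, y) = max_i inf_{ξ^{α_i}=1} |x_i^{1/α_i} − ξ y_i^{1/α_i}| and d_α(x, θ^{-1}(0)) = inf over zeros of θ. -/
/-! Choose `z` with `θ z ≠ 0` and `α`-th roots `v` of its coordinates. For `x` with `α`-th roots `y`,
weighted homogeneity makes `P t = θ ((v t + y) ^ α)` a polynomial of degree `d` with leading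
coefficient `θ z`, and `P 0 = θ x`. Every root `t` of `P` gives the zero `(v t + y) ^ α` of `θ`, at
weighted distance at most `|t| ‖v‖` from `x`; so each linear factor of `P 0 = θ z ∏ (0 - t)` is at
least `d_α(x, θ⁻¹(0)) / (‖v‖ + 1)`. -/

open scoped BigOperators

/-- `rootDist m a b = inf_{ξ^m = 1} |a^(1/m) − ξ b^(1/m)|`, realised as the infimum of
`|u − w|` over all `m`-th roots `u` of `a` and `w` of `b` (which is the same quantity). -/
noncomputable def rootDist (m : ℕ) (a b : ℂ) : ℝ :=
  sInf {r : ℝ | ∃ u w : ℂ, u ^ m = a ∧ w ^ m = b ∧ r = ‖u - w‖}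

/-- The weighted distance `d_α(x,y) = max_i inf_{ξ^{α_i}=1} |x_i^{1/α_i} − ξ y_i^{1/α_i}|`. -/
noncomputable def weightedDist {n : ℕ} (α : Fin n → ℕ) (x y : Fin n → ℂ) : ℝ :=
  ⨆ i, rootDist (α i) (x i) (y i)

/-- `d_α(x, θ⁻¹(0))`: the weighted distance from `x` to the zero set of `θ`. -/
noncomputable def weightedDistToZeros {n : ℕ} (α : Fin n → ℕ)
    (θ : MvPolynomial (Fin n) ℂ) (x : Fin n → ℂ) : ℝ :=
  sInf {r : ℝ | ∃ y : Fin n → ℂ, MvPolynomial.eval y θ = 0 ∧ r = weightedDist α x y}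

open Polynomial

theorem Polynomial.Splits.norm_leadingCoeff_mul_pow_le_norm_eval {K : Type*} [NormedField K]
    {f : K[X]} (hf : f.Splits) {x : K} {δ : ℝ} (hδ : 0 ≤ δ)
    (h : ∀ r ∈ f.roots, δ ≤ ‖x - r‖) :
    ‖f.leadingCoeff‖ * δ ^ f.natDegree ≤ ‖f.eval x‖ := by
  rw [hf.eval_eq_prod_roots, norm_mul, hf.natDegree_eq_card_roots]
  gcongr
  calc δ ^ f.roots.card = (f.roots.map fun _ => δ).prod := by simp
    _ ≤ (f.roots.map fun r => ‖x - r‖).prod :=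
      Multiset.prod_map_le_prod_map₀ _ _ (fun _ _ => hδ) h
    _ = ‖(f.roots.map (x - ·)).prod‖ := by
      rw [← normHom_apply, map_multiset_prod, Multiset.map_map]; rfl

theorem Polynomial.coeff_prod_sum_of_natDegree_le {R ι : Type*} [CommSemiring R] (s : Finset ι)
    {f : ι → R[X]} {k : ι → ℕ} (h : ∀ i ∈ s, (f i).natDegree ≤ k i) :
    (∏ i ∈ s, f i).coeff (∑ i ∈ s, k i) = ∏ i ∈ s, (f i).coeff (k i) := by
  classical
  induction s using Finset.cons_induction with
  | empty => simp
  | cons a s ha ih =>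
    have hs : ∀ i ∈ s, (f i).natDegree ≤ k i := fun i hi => h i (Finset.mem_cons_of_mem hi)
    rw [Finset.prod_cons, Finset.sum_cons, Finset.prod_cons,
      coeff_mul_add_eq_of_natDegree_le (h a (Finset.mem_cons_self a s))
        ((natDegree_prod_le s f).trans (Finset.sum_le_sum hs)), ih hs]

section WeightedLine

variable {σ R : Type*} [CommSemiring R] {α : σ → ℕ} {θ : MvPolynomial σ R} {d : ℕ}

variable (α θ) in
noncomputable def weightedLinePoly (y v : σ → R) : R[X] :=
  MvPolynomial.aeval (fun i => (C (v i) * X + C (y i)) ^ α i) θ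

theorem eval_weightedLinePoly (y v : σ → R) (t : R) :
    (weightedLinePoly α θ y v).eval t = MvPolynomial.eval (fun i => (v i * t + y i) ^ α i) θ := by
  rw [weightedLinePoly, ← coe_aeval_eq_eval, MvPolynomial.comp_aeval_apply,
    ← MvPolynomial.coe_aeval_eq_eval]
  simp

variable [Fintype σ]

theorem weightedLinePoly_eq_sum (y v : σ → R) :
    weightedLinePoly α θ y v = ∑ m ∈ θ.support,
      C (θ.coeff m) * ∏ i, (C (v i) * X + C (y i)) ^ (α i * m i) := by
  simp only [weightedLinePoly, MvPolynomial.aeval_def, MvPolynomial.eval₂_eq', algebraMap_eq,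
    ← pow_mul]

theorem natDegree_weightedLinePoly_le (hθ : ∀ m ∈ θ.support, ∑ i, α i * m i = d) (y v : σ → R) :
    (weightedLinePoly α θ y v).natDegree ≤ d := by
  rw [weightedLinePoly_eq_sum]
  refine natDegree_sum_le_of_forall_le _ _ fun m hm => ?_
  refine natDegree_C_mul_le _ _ |>.trans <| (natDegree_prod_le _ _).trans ?_
  rw [← hθ m hm]
  gcongr with i
  simpa using natDegree_pow_le_of_le (α i * m i) natDegree_linear_le

theorem coeff_weightedLinePoly (hθ : ∀ m ∈ θ.support, ∑ i, α i * m i = d) (y v : σ → R) :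
    (weightedLinePoly α θ y v).coeff d = MvPolynomial.eval (fun i => v i ^ α i) θ := by
  have hline (i : σ) : (C (v i) * X + C (y i)).natDegree ≤ 1 := natDegree_linear_le
  rw [weightedLinePoly_eq_sum, finsetSum_coeff, MvPolynomial.eval_eq']
  refine Finset.sum_congr rfl fun m hm => ?_
  rw [coeff_C_mul, ← hθ m hm, coeff_prod_sum_of_natDegree_le _ fun i _ => by
    simpa using natDegree_pow_le_of_le (α i * m i) (hline i)]
  congr 1
  refine Finset.prod_congr rfl fun i _ => ?_
  simpa [← pow_mul] using coeff_pow_of_natDegree_le (m := α i * m i) (hline i)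

theorem natDegree_weightedLinePoly (hθ : ∀ m ∈ θ.support, ∑ i, α i * m i = d) (y : σ → R)
    {v : σ → R} (hv : MvPolynomial.eval (fun i => v i ^ α i) θ ≠ 0) :
    (weightedLinePoly α θ y v).natDegree = d :=
  (natDegree_weightedLinePoly_le hθ y v).antisymm
    (le_natDegree_of_ne_zero (coeff_weightedLinePoly hθ y v ▸ hv))

theorem leadingCoeff_weightedLinePoly (hθ : ∀ m ∈ θ.support, ∑ i, α i * m i = d) (y : σ → R)
    {v : σ → R} (hv : MvPolynomial.eval (fun i => v i ^ α i) θ ≠ 0) :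
    (weightedLinePoly α θ y v).leadingCoeff = MvPolynomial.eval (fun i => v i ^ α i) θ := by
  rw [leadingCoeff, natDegree_weightedLinePoly hθ y hv, coeff_weightedLinePoly hθ]

end WeightedLine

theorem rootDist_nonneg (m : ℕ) (a b : ℂ) : 0 ≤ rootDist m a b :=
  Real.sInf_nonneg <| by
    rintro r ⟨u, w, -, -, rfl⟩
    exact norm_nonneg _

theorem rootDist_le_norm_sub {m : ℕ} {a b u w : ℂ} (hu : u ^ m = a) (hw : w ^ m = b) :
    rootDist m a b ≤ ‖u - w‖ :=
  csInf_le ⟨0, by rintro r ⟨u', w', -, -, rfl⟩; exact norm_nonneg _⟩ ⟨u, w, hu, hw, rfl⟩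

theorem weightedDist_nonneg {n : ℕ} (α : Fin n → ℕ) (x y : Fin n → ℂ) :
    0 ≤ weightedDist α x y :=
  Real.iSup_nonneg fun _ => rootDist_nonneg _ _ _

theorem weightedDistToZeros_nonneg {n : ℕ} (α : Fin n → ℕ) (θ : MvPolynomial (Fin n) ℂ)
    (x : Fin n → ℂ) : 0 ≤ weightedDistToZeros α θ x :=
  Real.sInf_nonneg <| by
    rintro r ⟨y, -, rfl⟩
    exact weightedDist_nonneg _ _ _

theorem weightedDistToZeros_le_weightedDist {n : ℕ} (α : Fin n → ℕ)
    {θ : MvPolynomial (Fin n) ℂ} (x : Fin n → ℂ) {y : Fin n → ℂ}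
    (hy : MvPolynomial.eval y θ = 0) : weightedDistToZeros α θ x ≤ weightedDist α x y :=
  csInf_le ⟨0, by rintro r ⟨y', -, rfl⟩; exact weightedDist_nonneg _ _ _⟩ ⟨y, hy, rfl⟩

theorem weightedDistToZeros_le_of_isRoot {n : ℕ} {α : Fin n → ℕ} {θ : MvPolynomial (Fin n) ℂ}
    {x y : Fin n → ℂ} (hy : ∀ i, y i ^ α i = x i) (v : Fin n → ℂ) {t : ℂ}
    (ht : (weightedLinePoly α θ y v).IsRoot t) :
    weightedDistToZeros α θ x ≤ ‖t‖ * ‖v‖ := by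
  rw [IsRoot, eval_weightedLinePoly] at ht
  refine (weightedDistToZeros_le_weightedDist α x ht).trans <|
    Real.iSup_le (fun i => (rootDist_le_norm_sub (hy i) rfl).trans ?_) (by positivity)
  rw [sub_add_cancel_right, norm_neg, norm_mul, mul_comm]
  gcongr
  exact norm_le_pi_norm v i

/-- **Łojasiewicz-type inequality for weighted homogeneous polynomials.**
If `θ ∈ ℂ[x₁,...,xₙ]` is `(α)`-weighted-homogeneous of degree `d = ν_α(θ)` for weights
`α ∈ ℕⁿ`, then there is `C' > 0` with `|θ(x)| ≥ C' · d_α(x, θ⁻¹(0))^d` for all `x ∈ ℂⁿ`. -/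
theorem weighted_homog_lower_bound (n : ℕ) (α : Fin n → ℕ) (hα : ∀ i, 0 < α i)
    (θ : MvPolynomial (Fin n) ℂ) (hθ0 : θ ≠ 0) (d : ℕ)
    (hθ : ∀ m ∈ θ.support, ∑ i, α i * m i = d) :
    ∃ C' : ℝ, 0 < C' ∧ ∀ x : Fin n → ℂ,
      C' * (weightedDistToZeros α θ x) ^ d ≤ ‖MvPolynomial.eval x θ‖ := by
  obtain ⟨z, hz⟩ : ∃ z, MvPolynomial.eval z θ ≠ 0 := by
    by_contra! h
    exact hθ0 (MvPolynomial.funext fun z => by simp [h z])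
  choose v hv using fun i => IsAlgClosed.exists_pow_nat_eq (z i) (hα i)
  obtain rfl : (fun i => v i ^ α i) = z := funext hv
  refine ⟨‖MvPolynomial.eval (fun i => v i ^ α i) θ‖ / (‖v‖ + 1) ^ d, by positivity, fun x => ?_⟩
  choose y hy using fun i => IsAlgClosed.exists_pow_nat_eq (x i) (hα i)
  set D := weightedDistToZeros α θ x
  have hroots : ∀ t ∈ (weightedLinePoly α θ y v).roots, D / (‖v‖ + 1) ≤ ‖0 - t‖ := by
    intro t ht
    rw [zero_sub, norm_neg, div_le_iff₀ (by positivity)]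
    calc D ≤ ‖t‖ * ‖v‖ := weightedDistToZeros_le_of_isRoot hy v (isRoot_of_mem_roots ht)
      _ ≤ ‖t‖ * (‖v‖ + 1) := by gcongr; linarith
  have key := (IsAlgClosed.splits _).norm_leadingCoeff_mul_pow_le_norm_eval
    (div_nonneg (weightedDistToZeros_nonneg α θ x) (by positivity)) hroots
  rw [leadingCoeff_weightedLinePoly hθ y hz, natDegree_weightedLinePoly hθ y hz,
    eval_weightedLinePoly] at key
  simp only [mul_zero, zero_add, hy] at key
  calc _ = ‖MvPolynomial.eval (fun i => v i ^ α i) θ‖ * (D / (‖v‖ + 1)) ^ d := by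
        rw [div_pow]; ring
    _ ≤ _ := key
end

section
/- Let k → k' be a field extension of characteristic zero and f ∈ k'[[x1,...,xn]] a power series algebraic over k[[x1,...,xn]]. Then the subfield of k' generated over k by all coefficients of f is a finite extension of k. -/
/-!
Order exponents degree-lexicographically. In characteristic zero, `f` is a root of a
polynomial `Q` with `Q'(f) ≠ 0`; let `δ` be the leading exponent and `μ` the leading
coefficient of `Q'(f)`. For `β ≻ δ`, write `f = g + e` with `g` the part of `f` below `β`.
Taylor expansion at `f` gives `Q(g) = -Q'(f) e + r e²`, whose coefficient at `δ + β` is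
`-μ f_β`. Since `μ` only depends on the coefficients `f_d` with `d ≼ δ`, all coefficients of `f`
lie in the field generated over `k` by these finitely many ones.
Each coefficient is algebraic over `k`: the lowest coefficient of a root of a nonzero
polynomial is algebraic over the coefficients of that polynomial (the terms of least leading
exponent must cancel), and induction along the monomial order applies this to `f - g`.
-/

open MvPowerSeries
open scoped MonomialOrder Polynomial

namespace Polynomial

theorem exists_eval_map_eq_zero_derivative_ne_zero {A B : Type*} [CommRing A]
    [IsAddTorsionFree A] [CommRing B] {φ : A →+* B} (hφ : Function.Injective φ) {x : B}
    {P : A[X]} (hP : P ≠ 0) (hx : (P.map φ).eval x = 0) :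
    ∃ Q : A[X], (Q.map φ).eval x = 0 ∧ (Q.map φ).derivative.eval x ≠ 0 := by
  induction hn : P.natDegree using Nat.strong_induction_on generalizing P with
  | _ n ih =>
  by_cases hx' : (P.map φ).derivative.eval x = 0
  · have hdeg : P.natDegree ≠ 0 := fun h0 => hP <| by
      rw [eq_C_of_natDegree_eq_zero h0, map_C, eval_C, ← map_zero φ] at hx
      rw [eq_C_of_natDegree_eq_zero h0, hφ hx, map_zero]
    rw [derivative_map] at hx'
    exact ih _ (hn ▸ natDegree_derivative_lt hdeg) (derivative_ne_zero.mpr hdeg) hx' rfl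
  · exact ⟨P, hx, hx'⟩

end Polynomial

theorem MonomialOrder.finite_degLex_le {σ : Type*} [LinearOrder σ] [Finite σ] (δ : σ →₀ ℕ) :
    {d | d ≼[degLex] δ}.Finite :=
  (Finsupp.finite_of_degree_le δ.degree).subset fun _ hd => Finsupp.DegLex.monotone_degree hd

namespace MvPowerSeries

variable {σ R : Type*}

instance [Semiring R] [IsAddTorsionFree R] : IsAddTorsionFree (MvPowerSeries σ R) :=
  inferInstanceAs (IsAddTorsionFree ((σ →₀ ℕ) → R))

theorem map_injective [Semiring R] {S : Type*} [Semiring S] {φ : R →+* S}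
    (hφ : Function.Injective φ) : Function.Injective (map (σ := σ) φ) :=
  fun _ _ h => ext fun d => hφ <| by rw [← coeff_map, ← coeff_map, h]

theorem map_map_algebraMap {A B C : Type*} [CommRing A] [CommRing B] [CommRing C] [Algebra A B]
    [Algebra A C] [Algebra B C] [IsScalarTower A B C] (P : (MvPowerSeries σ A)[X]) :
    (P.map (map (algebraMap A B))).map (map (algebraMap B C)) = P.map (map (algebraMap A C)) := by
  rw [Polynomial.map_map, ← map_comp, ← IsScalarTower.algebraMap_eq]

section CommSemiring

variable [CommSemiring R] (m : MonomialOrder σ)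

def VanishesBelow (a : σ →₀ ℕ) (u : MvPowerSeries σ R) : Prop :=
  ∀ d, d ≺[m] a → coeff d u = 0

variable {m}

theorem vanishesBelow_zero (u : MvPowerSeries σ R) : VanishesBelow m 0 u :=
  fun d hd => absurd hd (by simp)

theorem VanishesBelow.map {S : Type*} [CommSemiring S] (φ : R →+* S) {a : σ →₀ ℕ}
    {u : MvPowerSeries σ R} (hu : VanishesBelow m a u) : VanishesBelow m a (map φ u) :=
  fun d hd => by rw [coeff_map, hu d hd, map_zero]

theorem VanishesBelow.mul {a b : σ →₀ ℕ} {u v : MvPowerSeries σ R}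
    (hu : VanishesBelow m a u) (hv : VanishesBelow m b v) : VanishesBelow m (a + b) (u * v) := by
  classical
  intro d hd
  rw [coeff_mul]
  refine Finset.sum_eq_zero fun ⟨a', b'⟩ h => ?_
  obtain rfl : a' + b' = d := Finset.HasAntidiagonal.mem_antidiagonal.mp h
  rcases lt_or_ge (m.toSyn a') (m.toSyn a) with ha | ha
  · rw [hu a' ha, zero_mul]
  · have hb : b' ≺[m] b := lt_of_not_ge fun hb => hd.not_ge <| by
      simpa only [map_add] using add_le_add ha hb
    rw [hv b' hb, mul_zero]

theorem VanishesBelow.pow {a : σ →₀ ℕ} {u : MvPowerSeries σ R} (hu : VanishesBelow m a u) :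
    ∀ j : ℕ, VanishesBelow m (j • a) (u ^ j)
  | 0 => by simpa using vanishesBelow_zero 1
  | j + 1 => by simpa only [succ_nsmul, pow_succ] using (hu.pow j).mul hu

theorem VanishesBelow.coeff_add_mul {a b : σ →₀ ℕ} {u v : MvPowerSeries σ R}
    (hu : VanishesBelow m a u) (hv : VanishesBelow m b v) :
    coeff (a + b) (u * v) = coeff a u * coeff b v := by
  classical
  rw [coeff_mul]
  refine Finset.sum_eq_single_of_mem (a, b) (Finset.HasAntidiagonal.mem_antidiagonal.mpr rfl) ?_
  rintro ⟨a', b'⟩ h hne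
  have hsum : a' + b' = a + b := Finset.HasAntidiagonal.mem_antidiagonal.mp h
  rcases lt_trichotomy (m.toSyn a') (m.toSyn a) with ha | ha | ha
  · rw [hu a' ha, zero_mul]
  · obtain rfl := m.toSyn.injective ha
    exact absurd (by rw [add_left_cancel hsum]) hne
  · have hb : b' ≺[m] b := lt_of_add_lt_add_left <| calc
      m.toSyn a + m.toSyn b' < m.toSyn a' + m.toSyn b' := by gcongr
      _ = m.toSyn a + m.toSyn b := by rw [← map_add, hsum, map_add]
    rw [hv b' hb, mul_zero]

theorem VanishesBelow.coeff_nsmul_pow {a : σ →₀ ℕ} {u : MvPowerSeries σ R}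
    (hu : VanishesBelow m a u) : ∀ j : ℕ, coeff (j • a) (u ^ j) = coeff a u ^ j
  | 0 => by simp
  | j + 1 => by
    rw [succ_nsmul, pow_succ, (hu.pow j).coeff_add_mul hu, hu.coeff_nsmul_pow j, pow_succ]

theorem exists_vanishesBelow_coeff_ne_zero {u : MvPowerSeries σ R} (hu : u ≠ 0) :
    ∃ a, coeff a u ≠ 0 ∧ VanishesBelow m a u := by
  obtain ⟨d, hd⟩ := (ne_zero_iff_exists_coeff_ne_zero u).mp hu
  obtain ⟨a, ha, hmin⟩ := (InvImage.wf m.toSyn wellFounded_lt).has_min {d | coeff d u ≠ 0} ⟨d, hd⟩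
  exact ⟨a, ha, fun d hd => by_contra fun h => hmin d h hd⟩

theorem coeff_mul_eq_zero_of_forall_le {d : σ →₀ ℕ} {u : MvPowerSeries σ R}
    (hu : ∀ a, a ≼[m] d → coeff a u = 0) (v : MvPowerSeries σ R) : coeff d (u * v) = 0 := by
  classical
  rw [coeff_mul]
  refine Finset.sum_eq_zero fun ⟨a, b⟩ h => ?_
  obtain rfl : a + b = d := Finset.HasAntidiagonal.mem_antidiagonal.mp h
  rw [hu a (by simp), zero_mul]

end CommSemiring

section CommRing

variable [CommRing R] {m : MonomialOrder σ}

theorem coeff_add_eval_sub {P : (MvPowerSeries σ R)[X]} {f e : MvPowerSeries σ R}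
    (hf : P.eval f = 0) {δ β : σ →₀ ℕ} (hδβ : δ ≺[m] β)
    (hδ : VanishesBelow m δ (P.derivative.eval f)) (he : VanishesBelow m β e) :
    coeff (δ + β) (P.eval (f - e)) = -(coeff δ (P.derivative.eval f) * coeff β e) := by
  obtain ⟨r, hr⟩ := P.binomExpansion f (-e)
  have hrest : coeff (δ + β) (r * e ^ 2) = 0 :=
    (vanishesBelow_zero r).mul (he.pow 2) _ <| by
      simpa [two_nsmul] using add_lt_add_right hδβ (m.toSyn β)
  rw [sub_eq_add_neg, hr, hf, zero_add, neg_sq, map_add, hrest, add_zero, mul_neg, map_neg,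
    hδ.coeff_add_mul he]

theorem isAlgebraic_coeff_of_vanishesBelow {K L : Type*} [CommRing K] [CommRing L]
    [Algebra K L] {P : (MvPowerSeries σ K)[X]} (hP : P ≠ 0) {u : MvPowerSeries σ L}
    (hu : (P.map (map (algebraMap K L))).eval u = 0) {β : σ →₀ ℕ}
    (hβ : VanishesBelow m β u) : IsAlgebraic K (coeff β u) := by
  classical
  choose! δ hδ hδv using fun j (hj : j ∈ P.support) =>
    exists_vanishesBelow_coeff_ne_zero (m := m) (Polynomial.mem_support_iff.mp hj)
  set ν : ℕ → σ →₀ ℕ := fun j => δ j + j • β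
  obtain ⟨j₀, hj₀, hmin⟩ :=
    P.support.exists_min_image (m.toSyn ∘ ν) (Polynomial.support_nonempty.mpr hP)
  have hterm : ∀ j ∈ P.support, coeff (ν j₀) (map (algebraMap K L) (P.coeff j) * u ^ j) =
      if ν j = ν j₀ then algebraMap K L (coeff (δ j) (P.coeff j)) * coeff β u ^ j else 0 := by
    intro j hj
    split_ifs with hν
    · rw [← hν, ((hδv j hj).map _).coeff_add_mul (hβ.pow j), coeff_map, hβ.coeff_nsmul_pow]
    · exact ((hδv j hj).map _).mul (hβ.pow j) _
        ((hmin j hj).lt_of_ne fun h => hν (m.toSyn.injective h).symm)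
  refine ⟨∑ j ∈ P.support with ν j = ν j₀, Polynomial.monomial j (coeff (δ j) (P.coeff j)),
    fun h => hδ j₀ hj₀ ?_, ?_⟩
  · simpa [Polynomial.finsetSum_coeff, Polynomial.coeff_monomial, hj₀] using
      congrArg (Polynomial.coeff · j₀) h
  · have := congrArg (coeff (ν j₀)) hu
    rw [Polynomial.eval_map, Polynomial.eval₂_eq_sum, Polynomial.sum_def, map_sum,
      Finset.sum_congr rfl hterm, ← Finset.sum_filter, map_zero] at this
    simpa [Polynomial.aeval_monomial, ← Algebra.smul_def] using this

end CommRing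

section IntermediateField

variable {k k' : Type*} [Field k] [Field k'] [Algebra k k'] (E : IntermediateField k k')

theorem coeff_eval_map_mem (P : (MvPowerSeries σ k)[X]) (g : MvPowerSeries σ E)
    (d : σ →₀ ℕ) :
    coeff d ((P.map (map (algebraMap k k'))).eval (map (algebraMap E k') g)) ∈ E := by
  rw [← map_map_algebraMap (B := E), Polynomial.eval_map, Polynomial.eval₂_at_apply, coeff_map]
  exact Subtype.property _

theorem exists_coeff_map_eq_indicator {S : Set (σ →₀ ℕ)} {f : MvPowerSeries σ k'}
    (hf : ∀ d ∈ S, coeff d f ∈ E) :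
    ∃ g : MvPowerSeries σ E,
      ∀ d, coeff d (map (algebraMap E k') g) = S.indicator (coeff · f) d := by
  classical
  let g : MvPowerSeries σ E := fun d => if h : d ∈ S then ⟨coeff d f, hf d h⟩ else 0
  refine ⟨g, fun d => ?_⟩
  change algebraMap E k' (dite _ _ _) = _
  by_cases h : d ∈ S <;> simp [h]

theorem isAlgebraic_coeff_of_eval_eq_zero [LinearOrder σ] [WellFoundedGT σ]
    {P : (MvPowerSeries σ k)[X]} (hP : P ≠ 0) {f : MvPowerSeries σ k'}
    (hf : (P.map (map (algebraMap k k'))).eval f = 0) (β : σ →₀ ℕ) :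
    IsAlgebraic k (coeff β f) := by
  let m : MonomialOrder σ := .degLex
  induction β using (InvImage.wf m.toSyn wellFounded_lt).induction with | _ β ih =>
  let E := IntermediateField.adjoin k ((coeff · f) '' {d | d ≺[m] β})
  have : Algebra.IsAlgebraic k E := IntermediateField.isAlgebraic_adjoin <| by
    rintro _ ⟨d, hd, rfl⟩
    exact (ih d hd).isIntegral
  obtain ⟨g, hg⟩ := exists_coeff_map_eq_indicator E (S := {d | d ≺[m] β})
    fun d hd => IntermediateField.subset_adjoin _ _ ⟨d, hd, rfl⟩
  set e := f - map (algebraMap E k') g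
  have he : VanishesBelow m β e := fun d hd => by simp [e, hg, hd]
  have hQ : ((Polynomial.taylor g (P.map (map (algebraMap k E)))).map
      (map (algebraMap E k'))).eval e = 0 := by
    rw [Polynomial.map_taylor, map_map_algebraMap, Polynomial.taylor_eval, sub_add_cancel, hf]
  have hQ0 : Polynomial.taylor g (P.map (map (algebraMap k E))) ≠ 0 := by
    rwa [Ne, Polynomial.taylor_eq_zero, Polynomial.map_eq_zero_iff
      (map_injective (algebraMap k E).injective)]
  simpa [e, hg] using (isAlgebraic_coeff_of_vanishesBelow hQ0 hQ he).restrictScalars k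

theorem coeff_mem_of_forall_le_mem (m : MonomialOrder σ) {P : (MvPowerSeries σ k)[X]}
    {f : MvPowerSeries σ k'} (hf : (P.map (map (algebraMap k k'))).eval f = 0) {δ : σ →₀ ℕ}
    (hδ : coeff δ ((P.map (map (algebraMap k k'))).derivative.eval f) ≠ 0)
    (hδv : VanishesBelow m δ ((P.map (map (algebraMap k k'))).derivative.eval f))
    (hE : ∀ d, d ≼[m] δ → coeff d f ∈ E) (β : σ →₀ ℕ) : coeff β f ∈ E := by
  set D := (P.map (map (algebraMap k k'))).derivative
  have hμ : coeff δ (D.eval f) ∈ E := by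
    obtain ⟨g, hg⟩ := exists_coeff_map_eq_indicator E (S := {d | d ≼[m] δ}) hE
    obtain ⟨r, hr⟩ := Polynomial.sub_dvd_eval_sub f (map (algebraMap E k') g) D
    have hfg : coeff δ (D.eval f) = coeff δ (D.eval (map (algebraMap E k') g)) := by
      rw [← sub_eq_zero, ← map_sub, hr]
      exact coeff_mul_eq_zero_of_forall_le (m := m) (fun a ha => by simp [hg, ha]) r
    simpa only [hfg, D, ← Polynomial.derivative_map] using coeff_eval_map_mem E P.derivative g δ
  induction β using (InvImage.wf m.toSyn wellFounded_lt).induction with | _ β ih =>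
  by_cases hβ : β ≼[m] δ
  · exact hE β hβ
  obtain ⟨g, hg⟩ := exists_coeff_map_eq_indicator E (S := {d | d ≺[m] β}) ih
  set e := f - map (algebraMap E k') g
  have he : VanishesBelow m β e := fun d hd => by simp [e, hg, hd]
  have key := coeff_add_eval_sub hf (not_le.mp hβ) hδv he
  have hβe : coeff β e = coeff β f := by simp [e, hg]
  rw [sub_sub_cancel, hβe] at key
  have : coeff β f = -(coeff δ (D.eval f))⁻¹ *
      coeff (δ + β) ((P.map (map (algebraMap k k'))).eval (map (algebraMap E k') g)) := by
    rw [key, neg_mul_neg, inv_mul_cancel_left₀ hδ]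
  rw [this]
  exact mul_mem (neg_mem (inv_mem hμ)) (coeff_eval_map_mem E P g _)

end IntermediateField

end MvPowerSeries

/-- **Proposition (Cutkosky–Kashcheyeva).**  Let `k → k'` be a field extension in
characteristic zero, and let `f ∈ k'[[x₁,...,xₙ]]` be algebraic over `k[[x₁,...,xₙ]]`
(i.e. `f` is a root of a nonzero polynomial with coefficients in `k[[x₁,...,xₙ]]`).
Then the subfield of `k'` generated over `k` by all the coefficients of `f` is a finite
field extension of `k`. -/
theorem coeff_field_finite_of_algebraic (n : ℕ) (k k' : Type*) [Field k] [Field k']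
    [CharZero k] [Algebra k k']
    (f : MvPowerSeries (Fin n) k')
    (halg : ∃ P : Polynomial (MvPowerSeries (Fin n) k), P ≠ 0 ∧
        Polynomial.eval f (P.map (MvPowerSeries.map (algebraMap k k'))) = 0) :
    FiniteDimensional k
      (IntermediateField.adjoin k
        {c : k' | ∃ d : Fin n →₀ ℕ, c = MvPowerSeries.coeff d f}) := by
  obtain ⟨P, hP, hf⟩ := halg
  obtain ⟨Q, hQf, hQ'⟩ := Polynomial.exists_eval_map_eq_zero_derivative_ne_zero
    (map_injective (algebraMap k k').injective) hP hf
  let m : MonomialOrder (Fin n) := .degLex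
  obtain ⟨δ, hδ, hδv⟩ := exists_vanishesBelow_coeff_ne_zero (m := m) hQ'
  let E := IntermediateField.adjoin k ((coeff · f) '' {d | d ≼[m] δ})
  have : Finite ((coeff · f) '' {d | d ≼[m] δ}) :=
    ((MonomialOrder.finite_degLex_le δ).image _).to_subtype
  have : FiniteDimensional k E := IntermediateField.finiteDimensional_adjoin <| by
    rintro _ ⟨d, -, rfl⟩
    exact (isAlgebraic_coeff_of_eval_eq_zero hP hf d).isIntegral
  have hle : IntermediateField.adjoin k {c : k' | ∃ d, c = coeff d f} ≤ E := by
    rw [IntermediateField.adjoin_le_iff]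
    rintro _ ⟨d, rfl⟩
    exact coeff_mem_of_forall_le_mem E m hQf hδ hδv
      (fun d hd => IntermediateField.subset_adjoin _ _ ⟨d, hd, rfl⟩) d
  exact FiniteDimensional.of_injective (IntermediateField.inclusion hle).toLinearMap
    (IntermediateField.inclusion_injective hle)
end
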